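/- Let Ω ⊆ ℝ^q be open, δ ∈ (0,1), and let a_j : Ω → End(ℂ^{M_j}) (j = 1,2,3) be smooth and admit δ-admissible decompositions on Ω. If p₁ ∈ S^{μ₁}_{1,δ}(Ω×ℝ^q;(ℂ^{M₂},a₂),(ℂ^{M₃},a₃)) and p₂ ∈ S^{μ₂}_{1,δ}(Ω×ℝ^q;(ℂ^{M₁},a₁),(ℂ^{M₂},a₂)), then the pointwise composition (y,η) ↦ p₁(y,η)∘p₂(y,η) belongs to S^{μ₁+μ₂}_{1,δ}(Ω×ℝ^q;(ℂ^{M₁},a₁),(ℂ^{M₃},a₃)). -/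

import Mathlib

open Set Metric
noncomputable section

abbrev Vec (q : ℕ) := EuclideanSpace ℝ (Fin q)
abbrev CVec (M : ℕ) := EuclideanSpace ℂ (Fin M)
abbrev Hom' (M₁ M₂ : ℕ) := CVec M₁ →L[ℂ] CVec M₂
abbrev End' (M : ℕ) := Hom' M M

/-- `ϱ^a := exp((log ϱ)·a)`. -/
def rpowEnd {M : ℕ} (ϱ : ℝ) (a : End' M) : End' M :=
  NormedSpace.exp ((Real.log ϱ : ℂ) • a)

/-- `⟨η⟩ = (1+|η|²)^{1/2}`. -/
def jbr {q : ℕ} (η : Vec q) : ℝ := Real.sqrt (1 + ‖η‖ ^ 2)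

/-- Iterated partial derivatives in the second (covariable) slot. -/
def pdSnd {q : ℕ} {F : Type*} [NormedAddCommGroup F] [NormedSpace ℝ F]
    (β : List (Fin q)) (f : Vec q → Vec q → F) : Vec q → Vec q → F :=
  β.foldr (fun i g => fun y η => fderiv ℝ (g y) η (EuclideanSpace.single i (1:ℝ))) f

/-- Iterated partial derivatives in the first (base variable) slot. -/
def pdFst {q : ℕ} {F : Type*} [NormedAddCommGroup F] [NormedSpace ℝ F]
    (α : List (Fin q)) (f : Vec q → Vec q → F) : Vec q → Vec q → F :=
  α.foldr (fun i g => fun y η => fderiv ℝ (fun y' => g y' η) y (EuclideanSpace.single i (1:ℝ))) f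

/-- The twisted symbol class `S^μ_{1,δ}(Ω×ℝ^q;(ℂ^{M₁},a₁),(ℂ^{M₂},a₂))`. -/
def TwistedSymbol {q M₁ M₂ : ℕ} (Ω : Set (Vec q)) (δ μ : ℝ)
    (a₁ : Vec q → End' M₁) (a₂ : Vec q → End' M₂)
    (p : Vec q → Vec q → Hom' M₁ M₂) : Prop :=
  ContDiffOn ℝ (⊤ : ℕ∞) (fun z : Vec q × Vec q => p z.1 z.2) (Ω ×ˢ (univ : Set (Vec q))) ∧
  ∀ K : Set (Vec q), K ⊆ Ω → IsCompact K → ∀ α β : List (Fin q),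
    ∃ C > 0, ∀ y ∈ K, ∀ η : Vec q,
      ‖(rpowEnd (jbr η) (a₂ y)).comp
          ((pdFst α (pdSnd β p) y η).comp (rpowEnd (jbr η) (-(a₁ y))))‖
        ≤ C * jbr η ^ (μ - (β.length : ℝ) + δ * (α.length : ℝ))

/-- Spectrum of the restriction of `f` to an invariant subspace `V`. -/
def specRes {M : ℕ} (f : End' M) (V : Submodule ℂ (CVec M))
    (h : ∀ x ∈ V, f x ∈ V) : Set ℂ :=
  spectrum ℂ ((f : CVec M →ₗ[ℂ] CVec M).restrict h)

/-- `a` admits a `δ`-admissible decomposition on `Ω`. -/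
def AdmissibleDecomp {q M : ℕ} (Ω : Set (Vec q)) (δ : ℝ)
    (a : Vec q → End' M) : Prop :=
  ∃ (N : ℕ) (V : Fin N → Submodule ℂ (CVec M)),
    DirectSum.IsInternal V ∧
    ∃ hinv : ∀ k, ∀ y ∈ Ω, ∀ x ∈ V k, a y x ∈ V k,
      (∀ k, Metric.diam
          (closure (⋃ y, ⋃ hy : y ∈ Ω, specRes (a y) (V k) (hinv k y hy))) < δ) ∧
      Pairwise (fun k l => Disjoint
          (closure (⋃ y, ⋃ hy : y ∈ Ω, specRes (a y) (V k) (hinv k y hy)))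
          (closure (⋃ y, ⋃ hy : y ∈ Ω, specRes (a y) (V l) (hinv l y hy))))

set_option linter.unusedSectionVars false
set_option linter.unusedVariables false

def cB (M₁ M₂ M₃ : ℕ) : Hom' M₂ M₃ →L[ℝ] Hom' M₁ M₂ →L[ℝ] Hom' M₁ M₃ :=
  (ContinuousLinearMap.restrictScalarsL ℂ (Hom' M₁ M₂) (Hom' M₁ M₃) ℝ ℝ).comp
    ((ContinuousLinearMap.compL ℂ (CVec M₁) (CVec M₂) (CVec M₃)).restrictScalars ℝ)

lemma cB_apply {M₁ M₂ M₃ : ℕ} (f : Hom' M₂ M₃) (g : Hom' M₁ M₂) : cB M₁ M₂ M₃ f g = f.comp g := rfl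

lemma rpowEnd_neg_comp {M : ℕ} (ϱ : ℝ) (a : End' M) (x : CVec M) :
    rpowEnd ϱ (-a) (rpowEnd ϱ a x) = x := by
  have h : rpowEnd ϱ (-a) * rpowEnd ϱ a = 1 := by
    rw [rpowEnd, rpowEnd, smul_neg, ← NormedSpace.exp_add_of_commute_of_mem_ball (𝕂 := ℂ) (Commute.refl ((Real.log ϱ : ℂ) • a)).neg_left
      ((NormedSpace.expSeries_radius_eq_top ℂ (End' M)).symm ▸ edist_lt_top _ _)
      ((NormedSpace.expSeries_radius_eq_top ℂ (End' M)).symm ▸ edist_lt_top _ _),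
      neg_add_cancel, NormedSpace.exp_zero]
  have h2 := congrArg (fun T : End' M => T x) h
  simpa [ContinuousLinearMap.mul_apply] using h2

section ListHelpers
variable {ι X F : Type*} [NormedAddCommGroup X] [NormedSpace ℝ X]
  [NormedAddCommGroup F] [NormedSpace ℝ F]

lemma hasFDerivAt_listSum {L : List ι} {f : ι → X → F} {f' : ι → X →L[ℝ] F} {x : X}
    (h : ∀ t ∈ L, HasFDerivAt (f t) (f' t) x) :
    HasFDerivAt (fun x => (L.map (fun t => f t x)).sum) (L.map f').sum x := by
  induction L with
  | nil => simpa using hasFDerivAt_const (0 : F) x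
  | cons a L ih =>
    simp only [List.map_cons, List.sum_cons]
    exact (h a (List.mem_cons_self)).add (ih fun t ht => h t (List.mem_cons_of_mem a ht))

lemma listSum_clm_apply (L : List ι) (f' : ι → X →L[ℝ] F) (v : X) :
    (L.map f').sum v = (L.map fun t => f' t v).sum := by
  induction L with
  | nil => simp
  | cons a L ih => simp [ih]

lemma list_sum_map_add {G : Type*} [AddCommMonoid G] (L : List ι) (f g : ι → G) :
    (L.map fun t => f t + g t).sum = (L.map f).sum + (L.map g).sum := by
  induction L with
  | nil => simp
  | cons a L ih => simp [ih]; abel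

lemma sum_map_append_pair {κ : Type*} {G : Type*} [AddCommMonoid G] (L : List ι)
    (u v : ι → κ) (f : κ → G) :
    (L.map fun t => f (u t) + f (v t)).sum = ((L.map u ++ L.map v).map f).sum := by
  rw [List.map_append, List.sum_append, list_sum_map_add, List.map_map, List.map_map]
  rfl

lemma list_norm_sum_le (L : List ι) (f : ι → F) :
    ‖(L.map f).sum‖ ≤ (L.map fun t => ‖f t‖).sum := by
  induction L with
  | nil => simp
  | cons a L ih =>
    simp only [List.map_cons, List.sum_cons]
    exact (norm_add_le _ _).trans (by linarith)

lemma list_sum_le_sum (L : List ι) (f g : ι → ℝ) (h : ∀ t ∈ L, f t ≤ g t) :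
    (L.map f).sum ≤ (L.map g).sum := by
  induction L with
  | nil => simp
  | cons a L ih =>
    simp only [List.map_cons, List.sum_cons]
    exact add_le_add (h a (List.mem_cons_self)) (ih fun t ht => h t (List.mem_cons_of_mem a ht))

lemma list_sum_nonneg (L : List ι) (f : ι → ℝ) (h : ∀ t ∈ L, 0 ≤ f t) :
    0 ≤ (L.map f).sum := by
  simpa using list_sum_le_sum L (fun _ => 0) f h
end ListHelpers

lemma hasFDerivAt_clm_comp' {M₁ M₂ M₃ : ℕ} {X : Type*} [NormedAddCommGroup X] [NormedSpace ℝ X]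
    {f : X → Hom' M₂ M₃} {g : X → Hom' M₁ M₂} {x : X}
    (hf : DifferentiableAt ℝ f x) (hg : DifferentiableAt ℝ g x) :
    ∃ D : X →L[ℝ] Hom' M₁ M₃, HasFDerivAt (fun x => (f x).comp (g x)) D x ∧
      ∀ v, D v = (fderiv ℝ f x v).comp (g x) + (f x).comp (fderiv ℝ g x v) := by
  have hB := (cB M₁ M₂ M₃).isBoundedBilinearMap
  have h := (hB.hasFDerivAt (f x, g x)).comp x (hf.hasFDerivAt.prodMk hg.hasFDerivAt)
  refine ⟨_, h.congr_of_eventuallyEq (Filter.Eventually.of_forall fun y => rfl), fun v => ?_⟩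
  rw [ContinuousLinearMap.comp_apply, hB.deriv_apply]
  simp only [ContinuousLinearMap.prod_apply, cB_apply]
  exact add_comm _ _
variable {q : ℕ} {F : Type*} [NormedAddCommGroup F] [NormedSpace ℝ F] {Ω : Set (Vec q)}

lemma sliceSnd_hasFDerivAt (hΩ : IsOpen Ω) {f : Vec q → Vec q → F}
    (hf : ContDiffOn ℝ (⊤ : ℕ∞) (fun z : Vec q × Vec q => f z.1 z.2) (Ω ×ˢ univ))
    {y η : Vec q} (hy : y ∈ Ω) :
    HasFDerivAt (f y)
      ((fderiv ℝ (fun z : Vec q × Vec q => f z.1 z.2) (y, η)).comp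
        (ContinuousLinearMap.inr ℝ (Vec q) (Vec q))) η := by
  have hU : IsOpen (Ω ×ˢ (univ : Set (Vec q))) := hΩ.prod isOpen_univ
  have hd : DifferentiableAt ℝ (fun z : Vec q × Vec q => f z.1 z.2) (y, η) :=
    (hf.differentiableOn (by simp)).differentiableAt (hU.mem_nhds ⟨hy, trivial⟩)
  exact hd.hasFDerivAt.comp η (hasFDerivAt_prodMk_right y η)

lemma sliceFst_hasFDerivAt (hΩ : IsOpen Ω) {f : Vec q → Vec q → F}
    (hf : ContDiffOn ℝ (⊤ : ℕ∞) (fun z : Vec q × Vec q => f z.1 z.2) (Ω ×ˢ univ))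
    {y η : Vec q} (hy : y ∈ Ω) :
    HasFDerivAt (fun y' => f y' η)
      ((fderiv ℝ (fun z : Vec q × Vec q => f z.1 z.2) (y, η)).comp
        (ContinuousLinearMap.inl ℝ (Vec q) (Vec q))) y := by
  have hU : IsOpen (Ω ×ˢ (univ : Set (Vec q))) := hΩ.prod isOpen_univ
  have hd : DifferentiableAt ℝ (fun z : Vec q × Vec q => f z.1 z.2) (y, η) :=
    (hf.differentiableOn (by simp)).differentiableAt (hU.mem_nhds ⟨hy, trivial⟩)
  exact hd.hasFDerivAt.comp y (hasFDerivAt_prodMk_left (𝕜 := ℝ) y η)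

lemma contDiffOn_pdSnd_step (hΩ : IsOpen Ω) {f : Vec q → Vec q → F}
    (hf : ContDiffOn ℝ (⊤ : ℕ∞) (fun z : Vec q × Vec q => f z.1 z.2) (Ω ×ˢ univ)) (i : Fin q) :
    ContDiffOn ℝ (⊤ : ℕ∞)
      (fun z : Vec q × Vec q => fderiv ℝ (f z.1) z.2 (EuclideanSpace.single i (1:ℝ)))
      (Ω ×ˢ univ) := by
  have hU : IsOpen (Ω ×ˢ (univ : Set (Vec q))) := hΩ.prod isOpen_univ
  have h1 : ContDiffOn ℝ (⊤ : ℕ∞) (fderiv ℝ (fun z : Vec q × Vec q => f z.1 z.2)) (Ω ×ˢ univ) :=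
    hf.fderiv_of_isOpen hU (by simp)
  have h2 : ContDiffOn ℝ (⊤ : ℕ∞)
      (fun z : Vec q × Vec q => fderiv ℝ (fun z : Vec q × Vec q => f z.1 z.2) z
        ((0 : Vec q), EuclideanSpace.single i (1:ℝ))) (Ω ×ˢ univ) :=
    h1.clm_apply contDiffOn_const
  refine h2.congr fun z hz => ?_
  have h3 := (sliceSnd_hasFDerivAt (η := z.2) hΩ hf hz.1).fderiv
  calc fderiv ℝ (f z.1) z.2 (EuclideanSpace.single i (1:ℝ))
      = ((fderiv ℝ (fun z : Vec q × Vec q => f z.1 z.2) (z.1, z.2)).comp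
        (ContinuousLinearMap.inr ℝ (Vec q) (Vec q))) (EuclideanSpace.single i (1:ℝ)) := by
        rw [h3]
    _ = _ := by simp

lemma contDiffOn_pdFst_step (hΩ : IsOpen Ω) {f : Vec q → Vec q → F}
    (hf : ContDiffOn ℝ (⊤ : ℕ∞) (fun z : Vec q × Vec q => f z.1 z.2) (Ω ×ˢ univ)) (i : Fin q) :
    ContDiffOn ℝ (⊤ : ℕ∞)
      (fun z : Vec q × Vec q => fderiv ℝ (fun y' => f y' z.2) z.1 (EuclideanSpace.single i (1:ℝ)))
      (Ω ×ˢ univ) := by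
  have hU : IsOpen (Ω ×ˢ (univ : Set (Vec q))) := hΩ.prod isOpen_univ
  have h1 : ContDiffOn ℝ (⊤ : ℕ∞) (fderiv ℝ (fun z : Vec q × Vec q => f z.1 z.2)) (Ω ×ˢ univ) :=
    hf.fderiv_of_isOpen hU (by simp)
  have h2 : ContDiffOn ℝ (⊤ : ℕ∞)
      (fun z : Vec q × Vec q => fderiv ℝ (fun z : Vec q × Vec q => f z.1 z.2) z
        (EuclideanSpace.single i (1:ℝ), (0 : Vec q))) (Ω ×ˢ univ) :=
    h1.clm_apply contDiffOn_const
  refine h2.congr fun z hz => ?_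
  have h3 := (sliceFst_hasFDerivAt (η := z.2) hΩ hf hz.1).fderiv
  calc fderiv ℝ (fun y' => f y' z.2) z.1 (EuclideanSpace.single i (1:ℝ))
      = ((fderiv ℝ (fun z : Vec q × Vec q => f z.1 z.2) (z.1, z.2)).comp
        (ContinuousLinearMap.inl ℝ (Vec q) (Vec q))) (EuclideanSpace.single i (1:ℝ)) := by
        rw [h3]
    _ = _ := by simp

lemma contDiffOn_pdSnd (hΩ : IsOpen Ω) {f : Vec q → Vec q → F}
    (hf : ContDiffOn ℝ (⊤ : ℕ∞) (fun z : Vec q × Vec q => f z.1 z.2) (Ω ×ˢ univ)) (β : List (Fin q)) :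
    ContDiffOn ℝ (⊤ : ℕ∞) (fun z : Vec q × Vec q => pdSnd β f z.1 z.2) (Ω ×ˢ univ) := by
  induction β with
  | nil => exact hf
  | cons i β ih => exact contDiffOn_pdSnd_step hΩ ih i

lemma contDiffOn_pdFst_pdSnd (hΩ : IsOpen Ω) {f : Vec q → Vec q → F}
    (hf : ContDiffOn ℝ (⊤ : ℕ∞) (fun z : Vec q × Vec q => f z.1 z.2) (Ω ×ˢ univ))
    (α β : List (Fin q)) :
    ContDiffOn ℝ (⊤ : ℕ∞) (fun z : Vec q × Vec q => pdFst α (pdSnd β f) z.1 z.2) (Ω ×ˢ univ) := by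
  induction α with
  | nil => exact contDiffOn_pdSnd hΩ hf β
  | cons i α ih => exact contDiffOn_pdFst_step hΩ ih i

section Expansion
variable {q M₁ M₂ M₃ : ℕ} {Ω : Set (Vec q)}
  {P : Vec q → Vec q → Hom' M₂ M₃} {Q : Vec q → Vec q → Hom' M₁ M₂}

set_option maxHeartbeats 2000000 in
lemma expansionSnd (hΩ : IsOpen Ω)
    (hP : ContDiffOn ℝ (⊤ : ℕ∞) (fun z : Vec q × Vec q => P z.1 z.2) (Ω ×ˢ univ))
    (hQ : ContDiffOn ℝ (⊤ : ℕ∞) (fun z : Vec q × Vec q => Q z.1 z.2) (Ω ×ˢ univ))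
    (β : List (Fin q)) :
    ∃ L : List (List (Fin q) × List (Fin q)),
      (∀ t ∈ L, t.1.length + t.2.length = β.length) ∧
      ∀ y ∈ Ω, ∀ η, pdSnd β (fun y η => (P y η).comp (Q y η)) y η
        = (L.map fun t => (pdSnd t.1 P y η).comp (pdSnd t.2 Q y η)).sum := by
  induction β with
  | nil =>
    exact ⟨[([], [])], by simp, fun y hy η => by simp [pdSnd]⟩
  | cons i β ih =>
    obtain ⟨L, hlen, heq⟩ := ih
    refine ⟨L.map (fun t => (i :: t.1, t.2)) ++ L.map (fun t => (t.1, i :: t.2)), ?_, ?_⟩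
    · intro t ht
      rcases List.mem_append.1 ht with h | h <;> obtain ⟨s, hs, rfl⟩ := List.mem_map.1 h <;>
        · have := hlen s hs; simp; omega
    · intro y hy η
      have hfun : pdSnd β (fun y η => (P y η).comp (Q y η)) y
          = fun η' => (L.map fun t => (pdSnd t.1 P y η').comp (pdSnd t.2 Q y η')).sum :=
        funext fun η' => heq y hy η'
      have hD : ∀ t : List (Fin q) × List (Fin q),
          ∃ D : Vec q →L[ℝ] Hom' M₁ M₃,
            HasFDerivAt (fun η' => (pdSnd t.1 P y η').comp (pdSnd t.2 Q y η')) D η ∧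
            ∀ v, D v = (fderiv ℝ (pdSnd t.1 P y) η v).comp (pdSnd t.2 Q y η)
              + (pdSnd t.1 P y η).comp (fderiv ℝ (pdSnd t.2 Q y) η v) :=
        fun t => hasFDerivAt_clm_comp'
          ((sliceSnd_hasFDerivAt hΩ (contDiffOn_pdSnd hΩ hP t.1) hy).differentiableAt)
          ((sliceSnd_hasFDerivAt hΩ (contDiffOn_pdSnd hΩ hQ t.2) hy).differentiableAt)
      choose D hD1 hD2 using hD
      have hstep : pdSnd (i :: β) (fun y η => (P y η).comp (Q y η)) y η
          = fderiv ℝ (pdSnd β (fun y η => (P y η).comp (Q y η)) y) η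
              (EuclideanSpace.single i (1:ℝ)) := rfl
      rw [hstep, hfun, (hasFDerivAt_listSum (fun t _ => hD1 t)).fderiv, listSum_clm_apply]
      rw [show (L.map fun t => D t (EuclideanSpace.single i (1:ℝ)))
          = L.map fun t => (pdSnd (i :: t.1) P y η).comp (pdSnd t.2 Q y η)
              + (pdSnd t.1 P y η).comp (pdSnd (i :: t.2) Q y η) from
        List.map_congr_left fun t _ => hD2 t _]
      exact sum_map_append_pair L (fun t => (i :: t.1, t.2)) (fun t => (t.1, i :: t.2))
        (fun t => (pdSnd t.1 P y η).comp (pdSnd t.2 Q y η))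

set_option maxHeartbeats 2000000 in
lemma expansion (hΩ : IsOpen Ω)
    (hP : ContDiffOn ℝ (⊤ : ℕ∞) (fun z : Vec q × Vec q => P z.1 z.2) (Ω ×ˢ univ))
    (hQ : ContDiffOn ℝ (⊤ : ℕ∞) (fun z : Vec q × Vec q => Q z.1 z.2) (Ω ×ˢ univ))
    (α β : List (Fin q)) :
    ∃ L : List ((List (Fin q) × List (Fin q)) × (List (Fin q) × List (Fin q))),
      (∀ t ∈ L, t.1.1.length + t.2.1.length = α.length ∧
        t.1.2.length + t.2.2.length = β.length) ∧
      ∀ y ∈ Ω, ∀ η, pdFst α (pdSnd β (fun y η => (P y η).comp (Q y η))) y η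
        = (L.map fun t => (pdFst t.1.1 (pdSnd t.1.2 P) y η).comp
            (pdFst t.2.1 (pdSnd t.2.2 Q) y η)).sum := by
  induction α with
  | nil =>
    obtain ⟨L, hlen, heq⟩ := expansionSnd hΩ hP hQ β
    refine ⟨L.map fun s => (([], s.1), ([], s.2)), ?_, ?_⟩
    · intro t ht
      obtain ⟨s, hs, rfl⟩ := List.mem_map.1 ht
      simpa using hlen s hs
    · intro y hy η
      rw [List.map_map]
      exact heq y hy η
  | cons i α ih =>
    obtain ⟨L, hlen, heq⟩ := ih
    refine ⟨L.map (fun t => ((i :: t.1.1, t.1.2), t.2))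
        ++ L.map (fun t => (t.1, (i :: t.2.1, t.2.2))), ?_, ?_⟩
    · intro t ht
      rcases List.mem_append.1 ht with h | h <;> obtain ⟨s, hs, rfl⟩ := List.mem_map.1 h <;>
        · have h1 := (hlen s hs).1; have h2 := (hlen s hs).2
          constructor <;> simp <;> omega
    · intro y hy η
      have hev : (fun y' => pdFst α (pdSnd β (fun y η => (P y η).comp (Q y η))) y' η)
          =ᶠ[nhds y] (fun y' => (L.map fun t => (pdFst t.1.1 (pdSnd t.1.2 P) y' η).comp
            (pdFst t.2.1 (pdSnd t.2.2 Q) y' η)).sum) :=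
        Filter.eventually_of_mem (hΩ.mem_nhds hy) (fun y' hy' => heq y' hy' η)
      have hD : ∀ t : (List (Fin q) × List (Fin q)) × (List (Fin q) × List (Fin q)),
          ∃ D : Vec q →L[ℝ] Hom' M₁ M₃,
            HasFDerivAt (fun y' => (pdFst t.1.1 (pdSnd t.1.2 P) y' η).comp
              (pdFst t.2.1 (pdSnd t.2.2 Q) y' η)) D y ∧
            ∀ v, D v = (fderiv ℝ (fun y' => pdFst t.1.1 (pdSnd t.1.2 P) y' η) y v).comp
                (pdFst t.2.1 (pdSnd t.2.2 Q) y η)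
              + (pdFst t.1.1 (pdSnd t.1.2 P) y η).comp
                (fderiv ℝ (fun y' => pdFst t.2.1 (pdSnd t.2.2 Q) y' η) y v) :=
        fun t => hasFDerivAt_clm_comp'
          ((sliceFst_hasFDerivAt hΩ (contDiffOn_pdFst_pdSnd hΩ hP t.1.1 t.1.2) hy).differentiableAt)
          ((sliceFst_hasFDerivAt hΩ (contDiffOn_pdFst_pdSnd hΩ hQ t.2.1 t.2.2) hy).differentiableAt)
      choose D hD1 hD2 using hD
      have hstep : pdFst (i :: α) (pdSnd β (fun y η => (P y η).comp (Q y η))) y η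
          = fderiv ℝ (fun y' => pdFst α (pdSnd β (fun y η => (P y η).comp (Q y η))) y' η) y
              (EuclideanSpace.single i (1:ℝ)) := rfl
      rw [hstep, hev.fderiv_eq, (hasFDerivAt_listSum (fun t _ => hD1 t)).fderiv,
        listSum_clm_apply]
      rw [show (L.map fun t => D t (EuclideanSpace.single i (1:ℝ)))
          = L.map fun t => (pdFst (i :: t.1.1) (pdSnd t.1.2 P) y η).comp
              (pdFst t.2.1 (pdSnd t.2.2 Q) y η)
            + (pdFst t.1.1 (pdSnd t.1.2 P) y η).comp
              (pdFst (i :: t.2.1) (pdSnd t.2.2 Q) y η) from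
        List.map_congr_left fun t _ => hD2 t _]
      exact sum_map_append_pair L (fun t => ((i :: t.1.1, t.1.2), t.2))
        (fun t => (t.1, (i :: t.2.1, t.2.2)))
        (fun t => (pdFst t.1.1 (pdSnd t.1.2 P) y η).comp (pdFst t.2.1 (pdSnd t.2.2 Q) y η))

end Expansion


lemma one_le_jbr {q : ℕ} (η : Vec q) : 1 ≤ jbr η := by
  rw [jbr]
  exact Real.one_le_sqrt.mpr (le_add_of_nonneg_right (sq_nonneg _))

lemma jbr_pos {q : ℕ} (η : Vec q) : 0 < jbr η := lt_of_lt_of_le one_pos (one_le_jbr η)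

lemma key_split {M₁ M₂ M₃ : ℕ} (ϱ : ℝ) (a₁ : End' M₁) (a₂ : End' M₂) (a₃ : End' M₃)
    (T₁ : Hom' M₂ M₃) (T₂ : Hom' M₁ M₂) :
    (rpowEnd ϱ a₃).comp ((T₁.comp T₂).comp (rpowEnd ϱ (-a₁))) =
    ((rpowEnd ϱ a₃).comp (T₁.comp (rpowEnd ϱ (-a₂)))).comp
      ((rpowEnd ϱ a₂).comp (T₂.comp (rpowEnd ϱ (-a₁)))) := by
  refine ContinuousLinearMap.ext fun x => ?_
  simp only [ContinuousLinearMap.comp_apply]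
  rw [rpowEnd_neg_comp]

lemma comp_sum_comp {M₁ M₃ : ℕ} {ι : Type*} (L : List ι) (F : ι → Hom' M₁ M₃)
    (A : End' M₃) (B : End' M₁) :
    A.comp (((L.map F).sum).comp B) = (L.map fun t => A.comp ((F t).comp B)).sum := by
  induction L with
  | nil => simp
  | cons a L ih =>
    simp only [List.map_cons, List.sum_cons, ContinuousLinearMap.add_comp,
      ContinuousLinearMap.comp_add, ih]


set_option maxHeartbeats 2000000

/-- pointwise composition of twisted symbols adds the orders. -/
theorem statement5 {q M₁ M₂ M₃ : ℕ} (Ω : Set (Vec q)) (hΩ : IsOpen Ω)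
    (δ : ℝ) (hδ : δ ∈ Set.Ioo (0:ℝ) 1)
    (a₁ : Vec q → End' M₁) (a₂ : Vec q → End' M₂) (a₃ : Vec q → End' M₃)
    (ha₁ : ContDiffOn ℝ (⊤ : ℕ∞) a₁ Ω) (ha₂ : ContDiffOn ℝ (⊤ : ℕ∞) a₂ Ω) (ha₃ : ContDiffOn ℝ (⊤ : ℕ∞) a₃ Ω)
    (h1 : AdmissibleDecomp Ω δ a₁) (h2 : AdmissibleDecomp Ω δ a₂)
    (h3 : AdmissibleDecomp Ω δ a₃)
    (μ₁ μ₂ : ℝ)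
    (p₁ : Vec q → Vec q → Hom' M₂ M₃) (hp₁ : TwistedSymbol Ω δ μ₁ a₂ a₃ p₁)
    (p₂ : Vec q → Vec q → Hom' M₁ M₂) (hp₂ : TwistedSymbol Ω δ μ₂ a₁ a₂ p₂) :
    TwistedSymbol Ω δ (μ₁ + μ₂) a₁ a₃ (fun y η => (p₁ y η).comp (p₂ y η)) := by
  obtain ⟨hs₁, hb₁⟩ := hp₁
  obtain ⟨hs₂, hb₂⟩ := hp₂
  constructor
  · exact (cB M₁ M₂ M₃).isBoundedBilinearMap.contDiff.comp₂_contDiffOn hs₁ hs₂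
  · intro K hK hKc α β
    obtain ⟨L, hlen, heq⟩ := expansion hΩ hs₁ hs₂ α β
    have h₁ : ∀ t : (List (Fin q) × List (Fin q)) × (List (Fin q) × List (Fin q)),
        ∃ C > 0, ∀ y ∈ K, ∀ η : Vec q,
          ‖(rpowEnd (jbr η) (a₃ y)).comp
              ((pdFst t.1.1 (pdSnd t.1.2 p₁) y η).comp (rpowEnd (jbr η) (-(a₂ y))))‖
            ≤ C * jbr η ^ (μ₁ - (t.1.2.length : ℝ) + δ * (t.1.1.length : ℝ)) :=
      fun t => hb₁ K hK hKc t.1.1 t.1.2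
    have h₂ : ∀ t : (List (Fin q) × List (Fin q)) × (List (Fin q) × List (Fin q)),
        ∃ C > 0, ∀ y ∈ K, ∀ η : Vec q,
          ‖(rpowEnd (jbr η) (a₂ y)).comp
              ((pdFst t.2.1 (pdSnd t.2.2 p₂) y η).comp (rpowEnd (jbr η) (-(a₁ y))))‖
            ≤ C * jbr η ^ (μ₂ - (t.2.2.length : ℝ) + δ * (t.2.1.length : ℝ)) :=
      fun t => hb₂ K hK hKc t.2.1 t.2.2
    choose C₁ hC₁ hC₁' using h₁
    choose C₂ hC₂ hC₂' using h₂
    refine ⟨(L.map fun t => C₁ t * C₂ t).sum + 1, by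
      have := list_sum_nonneg L (fun t => C₁ t * C₂ t)
        (fun t _ => le_of_lt (mul_pos (hC₁ t) (hC₂ t)))
      linarith, ?_⟩
    intro y hy η
    have hyΩ : y ∈ Ω := hK hy
    have hρ : (0:ℝ) < jbr η := jbr_pos η
    rw [heq y hyΩ η, comp_sum_comp]
    refine le_trans (list_norm_sum_le L _) ?_
    have hterm : ∀ t ∈ L,
        ‖(rpowEnd (jbr η) (a₃ y)).comp
          ((((pdFst t.1.1 (pdSnd t.1.2 p₁) y η).comp (pdFst t.2.1 (pdSnd t.2.2 p₂) y η))).comp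
            (rpowEnd (jbr η) (-(a₁ y))))‖
        ≤ (C₁ t * C₂ t) * jbr η ^ (μ₁ + μ₂ - (β.length : ℝ) + δ * (α.length : ℝ)) := by
      intro t ht
      rw [key_split (a₂ := a₂ y)]
      refine le_trans (ContinuousLinearMap.opNorm_comp_le _ _) ?_
      have b₁ := hC₁' t y hy η
      have b₂ := hC₂' t y hy η
      have hmul : ‖(rpowEnd (jbr η) (a₃ y)).comp
            ((pdFst t.1.1 (pdSnd t.1.2 p₁) y η).comp (rpowEnd (jbr η) (-(a₂ y))))‖ *
          ‖(rpowEnd (jbr η) (a₂ y)).comp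
            ((pdFst t.2.1 (pdSnd t.2.2 p₂) y η).comp (rpowEnd (jbr η) (-(a₁ y))))‖
          ≤ (C₁ t * jbr η ^ (μ₁ - (t.1.2.length : ℝ) + δ * (t.1.1.length : ℝ))) *
            (C₂ t * jbr η ^ (μ₂ - (t.2.2.length : ℝ) + δ * (t.2.1.length : ℝ))) :=
        mul_le_mul b₁ b₂ (norm_nonneg _)
          (le_of_lt (mul_pos (hC₁ t) (Real.rpow_pos_of_pos hρ _)))
      refine le_trans hmul (le_of_eq ?_)
      have e₁ : ((α.length : ℝ)) = (t.1.1.length : ℝ) + (t.2.1.length : ℝ) := by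
        exact_mod_cast ((hlen t ht).1).symm
      have e₂ : ((β.length : ℝ)) = (t.1.2.length : ℝ) + (t.2.2.length : ℝ) := by
        exact_mod_cast ((hlen t ht).2).symm
      have hre : jbr η ^ (μ₁ + μ₂ - (β.length : ℝ) + δ * (α.length : ℝ))
          = jbr η ^ (μ₁ - (t.1.2.length : ℝ) + δ * (t.1.1.length : ℝ))
            * jbr η ^ (μ₂ - (t.2.2.length : ℝ) + δ * (t.2.1.length : ℝ)) := by
        rw [← Real.rpow_add hρ]
        congr 1
        rw [e₁, e₂]; ring
      rw [hre]; ring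
    refine le_trans (list_sum_le_sum L _
      (fun t => (C₁ t * C₂ t) * jbr η ^ (μ₁ + μ₂ - (β.length : ℝ) + δ * (α.length : ℝ)))
      hterm) ?_
    rw [List.sum_map_mul_right]
    have h0 : (0:ℝ) ≤ jbr η ^ (μ₁ + μ₂ - (β.length : ℝ) + δ * (α.length : ℝ)) :=
      le_of_lt (Real.rpow_pos_of_pos hρ _)
    nlinarith [list_sum_nonneg L (fun t => C₁ t * C₂ t)
      (fun t _ => le_of_lt (mul_pos (hC₁ t) (hC₂ t)))]
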